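/- Let A be an s×s real matrix and c ∈ ℝˢ with A·𝟙 = c, and define qₙ = A·cⁿ − cⁿ⁺¹/(n+1), where powers of c are taken componentwise. If q₁ has all components zero except possibly the second, and c₃ = 2c₄/3, and additionally the componentwise identity (A q₁) c = c₃ · (A q₁) holds, then the vector q₂ c (componentwise product) is a linear combination of q₁ and A q₁ whenever q₂ is a linear combination of q₁ and A q₁. -/
import Mathlib


/-- If q₁ is supported on index 2, c₃ = 2c₄/3, and (A q₁) c = c₃ • (A q₁), then
q₂ c is a linear combination of q₁ and A q₁ whenever q₂ is. -/
theorem q2c_linear_combination (s : ℕ) (hs : 4 ≤ s)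
    (A : Matrix (Fin s) (Fin s) ℝ) (c : Fin s → ℝ)
    (q : ℕ → Fin s → ℝ)
    (hq : ∀ n, q n = A.mulVec (fun i => c i ^ n) - fun i => c i ^ (n + 1) / (n + 1))
    (hrow : A.mulVec (fun _ => (1 : ℝ)) = c)
    (hq1supp : ∀ i : Fin s, i ≠ ⟨1, by omega⟩ → q 1 i = 0)
    (hc3 : c ⟨2, by omega⟩ = 2 * c ⟨3, by omega⟩ / 3)
    (hAq1c : (fun i => A.mulVec (q 1) i * c i) = c ⟨2, by omega⟩ • A.mulVec (q 1))
    (α β : ℝ) (hq2 : q 2 = α • q 1 + β • A.mulVec (q 1)) :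
    ∃ γ δ : ℝ, (fun i => q 2 i * c i) = γ • q 1 + δ • A.mulVec (q 1) := by
  refine ⟨α * c ⟨1, by omega⟩, β * c ⟨2, by omega⟩, funext fun i => ?_⟩
  have h1 : q 1 i * c i = c ⟨1, by omega⟩ * q 1 i := by
    by_cases hi : i = ⟨1, by omega⟩
    · subst hi; ring
    · rw [hq1supp i hi]; ring
  have h2 := congrFun hAq1c i
  simp only [Pi.smul_apply, smul_eq_mul] at h2 ⊢
  rw [congrFun hq2 i]
  simp only [Pi.add_apply, Pi.smul_apply, smul_eq_mul]
  rw [add_mul]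
  linear_combination α * h1 + β * h2
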